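/- Let Y be a K×N real matrix and let D₀ be a K×K invertible real matrix with unit Euclidean-norm columns. Then D₀ is a local (respectively global) minimum of the function D ↦ C₁(D|Y) := inf{‖X‖₁ : X is K×N and D·X = Y} restricted to the set of K×K matrices with unit Euclidean-norm columns if and only if the pair (D₀, D₀⁻¹·Y) is a local (respectively global) minimum of problem (P1'), i.e. of ‖X‖₁ over the set S(Y) of pairs (D,X) with D having unit-norm columns and D·X = Y. -/

import Mathlib

open Matrix Finset
open scoped ENNReal

noncomputable section

/-- Entrywise ℓ1 norm of a matrix: the sum of absolute values of all entries. -/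
def l1Norm {m n : Type*} [Fintype m] [Fintype n] (X : Matrix m n ℝ) : ℝ :=
  ∑ i, ∑ j, |X i j|

/-- The dictionary has unit Euclidean-norm columns. -/
def UnitCols {d K : ℕ} (D : Matrix (Fin d) (Fin K) ℝ) : Prop :=
  ∀ k, ∑ i, (D i k) ^ 2 = 1

/-- The ℓ1 cost `C₁(D|Y) = inf {‖X‖₁ : D·X = Y}` (equal to `+∞` if no `X` exists). -/
def C1 {d K N : ℕ} (D : Matrix (Fin d) (Fin K) ℝ) (Y : Matrix (Fin d) (Fin N) ℝ) : ℝ≥0∞ :=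
  ⨅ (X : Matrix (Fin K) (Fin N) ℝ) (_ : D * X = Y), ENNReal.ofReal (l1Norm X)

/-- `(D₀, X₀)` is a local minimum of problem (P1'). -/
def IsLocalMinP1 {d K N : ℕ} (Y : Matrix (Fin d) (Fin N) ℝ)
    (D₀ : Matrix (Fin d) (Fin K) ℝ) (X₀ : Matrix (Fin K) (Fin N) ℝ) : Prop :=
  ∃ U ∈ nhds (D₀, X₀), ∀ DX ∈ U, UnitCols DX.1 → DX.1 * DX.2 = Y →
    l1Norm X₀ ≤ l1Norm DX.2

/-! For an invertible `D` the constraint `D X = Y` has the single solution `D⁻¹ Y`, so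
`C₁(D|Y) = ‖D⁻¹ Y‖₁`. The global statement is then a rearrangement of quantifiers; for the
local one, invertibility is an open condition and `D ↦ (D, D⁻¹ Y)` is continuous, so a
neighbourhood of `(D₀, D₀⁻¹ Y)` pulls back to a neighbourhood of `D₀`. -/

open Filter Topology

section MatrixInverse

variable {n R : Type*} [Fintype n] [DecidableEq n] [Field R] [TopologicalSpace R]
  [IsTopologicalDivisionRing R]

lemma Matrix.eventually_isUnit_det [T1Space R] {A : Matrix n n R} (hA : IsUnit A.det) :
    ∀ᶠ B in 𝓝 A, IsUnit B.det := by
  simp only [isUnit_iff_ne_zero] at hA ⊢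
  exact continuous_id.matrix_det.continuousAt.eventually_ne hA

lemma Matrix.continuousAt_nonsing_inv {A : Matrix n n R} (hA : IsUnit A.det) :
    ContinuousAt Inv.inv A :=
  continuousAt_matrix_inv A <| by
    rw [Ring.inverse_eq_inv']
    exact continuousAt_inv₀ hA.ne_zero

end MatrixInverse

section C1

variable {d K N : ℕ}

lemma l1Norm_nonneg {m n : Type*} [Fintype m] [Fintype n] (X : Matrix m n ℝ) :
    0 ≤ l1Norm X :=
  sum_nonneg fun _ _ => sum_nonneg fun _ _ => abs_nonneg _

lemma C1_le_ofReal_l1Norm {D : Matrix (Fin d) (Fin K) ℝ} {Y : Matrix (Fin d) (Fin N) ℝ}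
    {X : Matrix (Fin K) (Fin N) ℝ} (hX : D * X = Y) : C1 D Y ≤ ENNReal.ofReal (l1Norm X) :=
  iInf₂_le X hX

lemma ofReal_le_C1_iff {D : Matrix (Fin d) (Fin K) ℝ} {Y : Matrix (Fin d) (Fin N) ℝ} {r : ℝ} :
    ENNReal.ofReal r ≤ C1 D Y ↔
      ∀ X : Matrix (Fin K) (Fin N) ℝ, D * X = Y → r ≤ l1Norm X := by
  simp only [C1, le_iInf_iff, ENNReal.ofReal_le_ofReal_iff (l1Norm_nonneg _)]

lemma C1_eq_of_isUnit_det {D : Matrix (Fin K) (Fin K) ℝ} (hD : IsUnit D.det)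
    (Y : Matrix (Fin K) (Fin N) ℝ) : C1 D Y = ENNReal.ofReal (l1Norm (D⁻¹ * Y)) :=
  le_antisymm (C1_le_ofReal_l1Norm (mul_nonsing_inv_cancel_left D Y hD)) <|
    ofReal_le_C1_iff.2 fun X hX => by rw [← hX, nonsing_inv_mul_cancel_left D X hD]

end C1

theorem stmt19_general {K N : ℕ} (Y : Matrix (Fin K) (Fin N) ℝ)
    (D₀ : Matrix (Fin K) (Fin K) ℝ) (hinv : IsUnit D₀) :
    ((∃ U ∈ nhds D₀, ∀ D ∈ U, UnitCols D → C1 D₀ Y ≤ C1 D Y) ↔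
        IsLocalMinP1 Y D₀ (D₀⁻¹ * Y)) ∧
      ((∀ D : Matrix (Fin K) (Fin K) ℝ, UnitCols D → C1 D₀ Y ≤ C1 D Y) ↔
        (∀ (D : Matrix (Fin K) (Fin K) ℝ) (X : Matrix (Fin K) (Fin N) ℝ),
          UnitCols D → D * X = Y → l1Norm (D₀⁻¹ * Y) ≤ l1Norm X)) := by
  have hdet : IsUnit D₀.det := (isUnit_iff_isUnit_det D₀).mp hinv
  rw [C1_eq_of_isUnit_det hdet, IsLocalMinP1, ← eventually_iff_exists_mem,
    ← eventually_iff_exists_mem]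
  simp only [ofReal_le_C1_iff]
  refine ⟨⟨fun h => ?_, fun h => ?_⟩, forall_congr' fun D => forall_comm⟩
  · filter_upwards [continuousAt_fst.eventually h] with DX hmin hunit hX using hmin hunit _ hX
  · have hpair : Tendsto (fun D => (D, D⁻¹ * Y)) (𝓝 D₀) (𝓝 (D₀, D₀⁻¹ * Y)) :=
      tendsto_id.prodMk_nhds <|
        (continuous_id.matrix_mul continuous_const).continuousAt.comp
          (continuousAt_nonsing_inv hdet)
    filter_upwards [hpair.eventually h, eventually_isUnit_det hdet] with D hmin hD hunit X hX
    obtain rfl : X = D⁻¹ * Y := by rw [← hX, nonsing_inv_mul_cancel_left D X hD]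
    exact hmin hunit (mul_nonsing_inv_cancel_left D Y hD)

/-- **Remark (equivalence of (P1) and (P1') for bases).** For a `K×K` invertible
dictionary `D₀` with unit columns: `D₀` is a local (resp. global) minimum of
`D ↦ C₁(D|Y)` restricted to unit-column matrices if and only if `(D₀, D₀⁻¹·Y)` is a
local (resp. global) minimum of problem (P1'). -/
theorem stmt19 {K N : ℕ} (Y : Matrix (Fin K) (Fin N) ℝ)
    (D₀ : Matrix (Fin K) (Fin K) ℝ) (hunit : UnitCols D₀) (hinv : IsUnit D₀) :
    ((∃ U ∈ nhds D₀, ∀ D ∈ U, UnitCols D → C1 D₀ Y ≤ C1 D Y) ↔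
        IsLocalMinP1 Y D₀ (D₀⁻¹ * Y)) ∧
      ((∀ D : Matrix (Fin K) (Fin K) ℝ, UnitCols D → C1 D₀ Y ≤ C1 D Y) ↔
        (∀ (D : Matrix (Fin K) (Fin K) ℝ) (X : Matrix (Fin K) (Fin N) ℝ),
          UnitCols D → D * X = Y → l1Norm (D₀⁻¹ * Y) ≤ l1Norm X)) :=
  stmt19_general Y D₀ hinv
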